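/- arXiv:1909.12809 — 4 statements merged into one kernel-verified Lean document; each statement's English description precedes it below -/
import Mathlib

section
/- Let H be a closed real-linear subspace of a complex Hilbert space 𝓗. Then H is cyclic (H + iH dense) if and only if its symplectic complement H' = {ξ : Im⟨ξ, η⟩ = 0 ∀η ∈ H} is separating (H' ∩ iH' = {0}). -/
/- STATEMENT 2: H closed real subspace of complex Hilbert 𝓗: H is cyclic (H+iH dense)
iff its symplectic complement H' is separating (H' ∩ iH' = {0}). -/

variable {𝓗 : Type*} [NormedAddCommGroup 𝓗] [InnerProductSpace ℂ 𝓗] [CompleteSpace 𝓗]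

/-- Multiplication by `i` as a real-linear map. -/
noncomputable def mulI : 𝓗 →ₗ[ℝ] 𝓗 where
  toFun x := Complex.I • x
  map_add' := smul_add Complex.I
  map_smul' r x := by simpa using (smul_comm r Complex.I x).symm

/-- The symplectic complement of a real subspace of a complex Hilbert space. -/
noncomputable def symplComp (H : Submodule ℝ 𝓗) : Submodule ℝ 𝓗 where
  carrier := {ξ | ∀ η ∈ H, (inner ℂ ξ η : ℂ).im = 0}
  zero_mem' := by intro η hη; simp
  add_mem' := by
    intro a b ha hb η hη
    rw [inner_add_left, Complex.add_im, ha η hη, hb η hη, add_zero]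
  smul_mem' := by
    intro c x hx η hη
    have : (c : ℝ) • x = (c : ℂ) • x := by simp [Complex.coe_smul]
    rw [this, inner_smul_left]
    simp [hx η hη]

/-- `H` is cyclic if `H + iH` is dense in `𝓗`. -/
def IsCyclicSub (H : Submodule ℝ 𝓗) : Prop :=
  Dense ((H ⊔ H.map (mulI : 𝓗 →ₗ[ℝ] 𝓗) : Submodule ℝ 𝓗) : Set 𝓗)

/-- `H` is separating if `H ∩ iH = {0}`. -/
def IsSeparatingSub (H : Submodule ℝ 𝓗) : Prop :=
  H ⊓ H.map (mulI : 𝓗 →ₗ[ℝ] 𝓗) = ⊥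

/-- `H` is a standard subspace: closed, cyclic and separating. -/
def IsStandardSub (H : Submodule ℝ 𝓗) : Prop :=
  IsClosed (H : Set 𝓗) ∧ IsCyclicSub H ∧ IsSeparatingSub H

/-! With respect to the real inner product `Re ⟨·, ·⟩` one has `H' = (iH)ᗮ` and `iH' = Hᗮ`,
hence `(H + iH)ᗮ = H' ∩ iH'`; and a real subspace is dense iff its orthogonal complement is
trivial. -/

section

variable {E : Type*} [NormedAddCommGroup E] [InnerProductSpace ℂ E]

attribute [local instance] InnerProductSpace.complexToReal

lemma mulI_apply (x : E) : mulI x = Complex.I • x := rfl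

lemma real_inner_I_smul_left (x y : E) : inner ℝ (Complex.I • x) y = (inner ℂ x y).im := by
  simp [real_inner_eq_re_inner ℂ, inner_smul_left]

lemma real_inner_I_smul_right (x y : E) : inner ℝ x (Complex.I • y) = -(inner ℂ x y).im := by
  simp [real_inner_eq_re_inner ℂ, inner_smul_right]

lemma symplComp_eq_orthogonal_map_mulI (H : Submodule ℝ E) :
    symplComp H = (H.map mulI)ᗮ := by
  ext ξ
  simp only [Submodule.mem_orthogonal', Submodule.mem_map, forall_exists_index, and_imp,
    forall_apply_eq_imp_iff₂, mulI_apply, real_inner_I_smul_right, neg_eq_zero]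
  rfl

lemma map_mulI_symplComp (H : Submodule ℝ E) : (symplComp H).map mulI = Hᗮ := by
  ext ξ
  rw [Submodule.mem_orthogonal']
  constructor
  · rintro ⟨ζ, hζ, rfl⟩ η hη
    rw [mulI_apply, real_inner_I_smul_left]
    exact hζ η hη
  · intro hξ
    have hξ_eq : Complex.I • -Complex.I • ξ = ξ := by simp [smul_smul]
    refine ⟨-Complex.I • ξ, fun η hη => ?_, hξ_eq⟩
    rw [← real_inner_I_smul_left, hξ_eq]
    exact hξ η hη

lemma orthogonal_sup_map_mulI (H : Submodule ℝ E) :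
    (H ⊔ H.map mulI)ᗮ = symplComp H ⊓ (symplComp H).map mulI := by
  rw [← Submodule.inf_orthogonal, map_mulI_symplComp, symplComp_eq_orthogonal_map_mulI, inf_comm]

end

theorem stmt_2_general (H : Submodule ℝ 𝓗) :
    IsCyclicSub H ↔ IsSeparatingSub (symplComp H) := by
  let := InnerProductSpace.complexToReal (G := 𝓗)
  rw [IsCyclicSub, IsSeparatingSub, ← orthogonal_sup_map_mulI,
    Submodule.dense_iff_topologicalClosure_eq_top, Submodule.topologicalClosure_eq_top_iff]

theorem stmt_2 (H : Submodule ℝ 𝓗) (hH : IsClosed (H : Set 𝓗)) :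
    IsCyclicSub H ↔ IsSeparatingSub (symplComp H) :=
  stmt_2_general H
end

section
/- Let H ⊂ 𝓗 be a standard subspace with Tomita operator S_H, and let E be an orthogonal projection on 𝓗 that commutes with S_H (i.e., E maps the domain H + iH into itself and S_H E ξ = E S_H ξ for all ξ in the domain). Then H = EH ⊕ (1−E)H as an internal direct sum of real subspaces, i.e., every ξ ∈ H satisfies Eξ ∈ H and (1−E)ξ ∈ H. Moreover, EH is a standard subspace of the complex Hilbert space E𝓗 and (1−E)H is a standard subspace of (1−E)𝓗. -/
/- STATEMENT 5: H standard, E an orthogonal projection commuting with the Tomita operator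
S_H.  Then every ξ ∈ H satisfies Eξ ∈ H and (1-E)ξ ∈ H (so H = EH ⊕ (1-E)H), and EH,
(1-E)H are standard subspaces of E𝓗 and (1-E)𝓗 respectively. -/

variable {𝓗 : Type*} [NormedAddCommGroup 𝓗] [InnerProductSpace ℂ 𝓗] [CompleteSpace 𝓗]

/-- `S` is the Tomita operator of `H`: the (anti-linear) partial map with domain `H + iH`
sending `ξ + iη ↦ ξ - iη` for `ξ, η ∈ H`. -/
def IsTomitaOf (H : Submodule ℝ 𝓗) (S : 𝓗 →ₗ.[ℝ] 𝓗) : Prop :=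
  S.domain = H ⊔ H.map (mulI : 𝓗 →ₗ[ℝ] 𝓗) ∧
  ∀ ξ ∈ H, ∀ η ∈ H, ∀ hmem : ξ + Complex.I • η ∈ S.domain,
    S ⟨ξ + Complex.I • η, hmem⟩ = ξ - Complex.I • η

/-- A real-linear isometric bijection is anti-unitary if it is conjugate-linear. -/
def IsAntiUnitary (J : 𝓗 ≃ₗᵢ[ℝ] 𝓗) : Prop :=
  ∀ (c : ℂ) (x : 𝓗), J (c • x) = (starRingEnd ℂ) c • J x

/-- `H` is a standard subspace of the (complex) subspace `V ⊆ 𝓗`: it is closed, `H + iH` is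
dense in `V`, and `H ∩ iH = {0}`. -/
def IsStandardIn (H : Submodule ℝ 𝓗) (V : Set 𝓗) : Prop :=
  IsClosed (H : Set 𝓗) ∧
  closure ((H ⊔ H.map (mulI : 𝓗 →ₗ[ℝ] 𝓗) : Submodule ℝ 𝓗) : Set 𝓗) = V ∧
  H ⊓ H.map (mulI : 𝓗 →ₗ[ℝ] 𝓗) = ⊥

/-
Vectors fixed by the Tomita operator are exactly the vectors of `H`: if `ξ + iη` with
`ξ, η ∈ H` is fixed by `S_H`, then `2iη = 0`. Hence every operator commuting with `S_H` maps `H`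
into itself, and so does `1 - E`. The image of `H` under an idempotent `P` leaving `H` invariant is
then `H ∩ ran P`, which is closed and separating because `H` is, and `PH + iPH = P(H + iH)` is dense
in `ran P` because `H + iH` is dense and `P` is continuous and complex-linear.
-/

open ContinuousLinearMap

section

variable {V : Type*} [NormedAddCommGroup V] [InnerProductSpace ℂ V]

namespace IsTomitaOf

variable {H : Submodule ℝ V} {S : V →ₗ.[ℝ] V}

theorem le_domain (hS : IsTomitaOf H S) : H ≤ S.domain :=
  hS.1 ▸ le_sup_left

theorem apply_eq_self (hS : IsTomitaOf H S) {ξ : V} (hξ : ξ ∈ H) (hd : ξ ∈ S.domain) :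
    S ⟨ξ, hd⟩ = ξ := by
  have hd' : ξ + Complex.I • (0 : V) ∈ S.domain := by simpa using hd
  simpa using hS.2 ξ hξ 0 H.zero_mem hd'

theorem mem_of_apply_eq_self (hS : IsTomitaOf H S) {x : V} (hd : x ∈ S.domain)
    (hfix : S ⟨x, hd⟩ = x) : x ∈ H := by
  obtain ⟨ξ, hξ, _, ⟨η, hη, rfl⟩, rfl⟩ := Submodule.mem_sup.mp (hS.1 ▸ hd)
  have hS_apply := hS.2 ξ hξ η hη hd
  have hfix' : S ⟨ξ + Complex.I • η, hd⟩ = ξ + Complex.I • η := hfix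
  rw [hfix', ← sub_eq_zero, add_sub_sub_cancel, ← two_smul ℂ, smul_smul] at hS_apply
  have hη0 : η = 0 := by simpa [Complex.I_ne_zero] using hS_apply
  simpa [hη0] using hξ

theorem apply_mem_of_commute (hS : IsTomitaOf H S) (P : V → V)
    (hdom : ∀ x ∈ S.domain, P x ∈ S.domain)
    (hcomm : ∀ (x : V) (hx : x ∈ S.domain) (hx' : P x ∈ S.domain),
      S ⟨P x, hx'⟩ = P (S ⟨x, hx⟩))
    {ξ : V} (hξ : ξ ∈ H) : P ξ ∈ H := by
  have hd := hS.le_domain hξ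
  refine hS.mem_of_apply_eq_self (hdom ξ hd) ?_
  rw [hcomm ξ hd, hS.apply_eq_self hξ hd]

end IsTomitaOf

theorem IsSeparatingSub.mono {H K : Submodule ℝ V} (hH : IsSeparatingSub H) (hKH : K ≤ H) :
    IsSeparatingSub K :=
  le_bot_iff.mp (hH ▸ inf_le_inf hKH (Submodule.map_mono hKH))

theorem map_sup_map_mulI (P : V →L[ℂ] V) (H : Submodule ℝ V) :
    (H ⊔ H.map mulI).map (P.toLinearMap.restrictScalars ℝ) =
      H.map (P.toLinearMap.restrictScalars ℝ) ⊔
        (H.map (P.toLinearMap.restrictScalars ℝ)).map mulI := by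
  have hcomm : (P.toLinearMap.restrictScalars ℝ).comp mulI =
      mulI.comp (P.toLinearMap.restrictScalars ℝ) :=
    LinearMap.ext fun x => P.map_smul Complex.I x
  rw [Submodule.map_sup, ← Submodule.map_comp, hcomm, Submodule.map_comp]

theorem coe_map_eq_inter_range {P : V →L[ℂ] V} (hP : IsIdempotentElem P) {H : Submodule ℝ V}
    (hPH : ∀ ξ ∈ H, P ξ ∈ H) :
    (H.map (P.toLinearMap.restrictScalars ℝ) : Set V) = (H : Set V) ∩ Set.range P := by
  ext x
  constructor
  · rintro ⟨ξ, hξ, rfl⟩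
    exact ⟨hPH ξ hξ, ξ, rfl⟩
  · rintro ⟨hx, ξ, rfl⟩
    exact ⟨P ξ, hx, congr($hP ξ)⟩

theorem IsStandardSub.isStandardIn_map {H : Submodule ℝ V} (hH : IsStandardSub H)
    {P : V →L[ℂ] V} (hP : IsIdempotentElem P) (hPH : ∀ ξ ∈ H, P ξ ∈ H) :
    IsStandardIn (H.map (P.toLinearMap.restrictScalars ℝ)) (Set.range P) := by
  have hrange : IsClosed (Set.range P) := by
    simpa only [LinearMap.coe_range, coe_coe] using hP.isClosed_range
  refine ⟨?_, ?_, hH.2.2.mono fun x ⟨ξ, hξ, hx⟩ => hx ▸ hPH ξ hξ⟩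
  · rw [coe_map_eq_inter_range hP hPH]
    exact hH.1.inter hrange
  · rw [← map_sup_map_mulI, Submodule.map_coe, LinearMap.coe_restrictScalars, coe_coe,
      ← closure_image_closure P.continuous, hH.2.1.closure_eq, Set.image_univ,
      hrange.closure_eq]

end

theorem stmt_5_general (H : Submodule ℝ 𝓗) (hH : IsStandardSub H)
    (S : 𝓗 →ₗ.[ℝ] 𝓗) (hS : IsTomitaOf H S)
    (E : 𝓗 →L[ℂ] 𝓗) (hEproj : E ∘L E = E)
    (hEdom : ∀ x ∈ S.domain, E x ∈ S.domain)
    (hEcomm : ∀ (x : 𝓗) (hx : x ∈ S.domain) (hx' : E x ∈ S.domain),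
      S ⟨E x, hx'⟩ = E (S ⟨x, hx⟩)) :
    (∀ ξ ∈ H, E ξ ∈ H ∧ ξ - E ξ ∈ H) ∧
    IsStandardIn (H.map ((E.toLinearMap).restrictScalars ℝ)) (Set.range (⇑E)) ∧
    IsStandardIn (H.map (((1 - E).toLinearMap).restrictScalars ℝ)) (Set.range (⇑(1 - E))) := by
  have hE : IsIdempotentElem E := hEproj
  have hEH : ∀ ξ ∈ H, E ξ ∈ H := fun ξ hξ => hS.apply_mem_of_commute E hEdom hEcomm hξ
  have hFH : ∀ ξ ∈ H, (1 - E) ξ ∈ H := fun ξ hξ => sub_mem hξ (hEH ξ hξ)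
  exact ⟨fun ξ hξ => ⟨hEH ξ hξ, hFH ξ hξ⟩, hH.isStandardIn_map hE hEH,
    hH.isStandardIn_map hE.one_sub hFH⟩

theorem stmt_5 (H : Submodule ℝ 𝓗) (hH : IsStandardSub H)
    (S : 𝓗 →ₗ.[ℝ] 𝓗) (hS : IsTomitaOf H S)
    (E : 𝓗 →L[ℂ] 𝓗) (hEproj : E ∘L E = E) (hEsa : IsSelfAdjoint E)
    (hEdom : ∀ x ∈ S.domain, E x ∈ S.domain)
    (hEcomm : ∀ (x : 𝓗) (hx : x ∈ S.domain) (hx' : E x ∈ S.domain),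
      S ⟨E x, hx'⟩ = E (S ⟨x, hx⟩)) :
    (∀ ξ ∈ H, E ξ ∈ H ∧ ξ - E ξ ∈ H) ∧
    IsStandardIn (H.map ((E.toLinearMap).restrictScalars ℝ)) (Set.range (⇑E)) ∧
    IsStandardIn (H.map (((1 - E).toLinearMap).restrictScalars ℝ)) (Set.range (⇑(1 - E))) :=
  stmt_5_general H hH S hS E hEproj hEdom hEcomm
end

section
/- Let H be a standard subspace of 𝓗 and K ⊂ H a closed real-linear subspace such that Δ_H^{it} K = K for all t ∈ ℝ, where Δ_H is the modular operator of H. If K is cyclic in 𝓗 (i.e., K + iK is dense in 𝓗), then K = H. -/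
/- STATEMENT 7: H standard, K ⊆ H a closed real subspace invariant under the modular group
of H (here characterized by the KMS condition).  If K is cyclic then K = H. -/

variable {𝓗 : Type*} [NormedAddCommGroup 𝓗] [InnerProductSpace ℂ 𝓗] [CompleteSpace 𝓗]

/-- A strongly continuous one-parameter unitary group. -/
def IsOneParamUnitaryGroup (G : ℝ → (𝓗 ≃ₗᵢ[ℂ] 𝓗)) : Prop :=
  G 0 = LinearIsometryEquiv.refl ℂ 𝓗 ∧
  (∀ s t : ℝ, ∀ x : 𝓗, G (s + t) x = G s (G t x)) ∧
  ∀ x : 𝓗, Continuous fun t : ℝ => G t x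

/-- The KMS condition (at inverse temperature 1) of the group `G` with respect to the real
subspace `H`: for all ξ, η ∈ H the function t ↦ ⟪η, G(t)ξ⟫ admits a bounded continuous
extension to the closed strip {z : -1 ≤ Im z ≤ 0}, holomorphic in the interior, whose value
on the lower boundary is t ↦ ⟪ξ, G(t)η⟫.  This property characterizes the modular group
`t ↦ Δ_H^{it}` of a standard subspace `H`. -/
def SatisfiesKMSFor (H : Submodule ℝ 𝓗) (G : ℝ → (𝓗 ≃ₗᵢ[ℂ] 𝓗)) : Prop :=
  ∀ ξ ∈ H, ∀ η ∈ H, ∃ F : ℂ → ℂ,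
    ContinuousOn F {z : ℂ | -1 ≤ z.im ∧ z.im ≤ 0} ∧
    (∀ z : ℂ, -1 < z.im → z.im < 0 → DifferentiableAt ℂ F z) ∧
    Bornology.IsBounded (F '' {z : ℂ | -1 ≤ z.im ∧ z.im ≤ 0}) ∧
    (∀ t : ℝ, F (t : ℂ) = (inner ℂ η (G t ξ) : ℂ)) ∧
    (∀ t : ℝ, F ((t : ℂ) - Complex.I) = (inner ℂ ξ (G t η) : ℂ))

/-- `G` is the modular group of the standard subspace `H`. -/
def IsModularGroupOf (H : Submodule ℝ 𝓗) (G : ℝ → (𝓗 ≃ₗᵢ[ℂ] 𝓗)) : Prop :=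
  IsOneParamUnitaryGroup G ∧ SatisfiesKMSFor H G

/-! Since `K` is `G`-invariant, for `ζ ∈ H` real-orthogonal to `K` and `η ∈ K` the KMS function
of the pair `(ζ, η)` has purely imaginary boundary values on the strip `-1 ≤ im z ≤ 0`. Applying
Phragmén–Lindelöf to `exp (± F)` shows that `re F = 0` on the whole strip, so `F` is constant by
the open mapping theorem. Comparing `F 0 = ⟪η, ζ⟫` with `F (-I) = ⟪ζ, η⟫` gives `⟪η, ζ⟫ = 0`, and
cyclicity of `K` forces `ζ = 0`. Hence the real orthogonal complement of `K` in `H` is trivial,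
and `K = H` because `K` is closed. -/

open Complex Set Bornology
open scoped InnerProductSpace

lemma re_nonpos_horizontal_strip {a b : ℝ} {f : ℂ → ℂ}
    (hd : DiffContOnCl ℂ f (im ⁻¹' Ioo a b)) (hB : IsBounded (f '' (im ⁻¹' Ioo a b)))
    (ha : ∀ z : ℂ, z.im = a → (f z).re ≤ 0) (hb : ∀ z : ℂ, z.im = b → (f z).re ≤ 0)
    {z : ℂ} (hza : a ≤ z.im) (hzb : z.im ≤ b) : (f z).re ≤ 0 := by
  obtain ⟨C, hC⟩ := isBounded_iff_forall_norm_le.1 hB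
  have hexp : ‖exp (f z)‖ ≤ 1 := by
    -- `exp ∘ f` is bounded on the strip, so the growth condition holds with `B = 0`.
    refine PhragmenLindelof.horizontal_strip (f := fun w => exp (f w))
      (differentiable_exp.comp_diffContOnCl hd)
      ⟨Real.pi / (b - a) - 1, by linarith, 0, ?_⟩ (fun w hw => ?_) (fun w hw => ?_) hza hzb
    · simp only [zero_mul, Real.exp_zero]
      refine (Asymptotics.isBigO_one_iff ℝ).2 ⟨Real.exp C, Filter.eventually_map.2 ?_⟩
      filter_upwards [Filter.mem_inf_of_right (Filter.mem_principal_self _)] with w hw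
      rw [norm_exp, Real.exp_le_exp]
      exact (re_le_norm _).trans (hC _ (mem_image_of_mem f hw))
    · rw [norm_exp, Real.exp_le_one_iff]; exact ha w hw
    · rw [norm_exp, Real.exp_le_one_iff]; exact hb w hw
  rwa [norm_exp, Real.exp_le_one_iff] at hexp

lemma exists_eqOn_const_horizontal_strip {a b : ℝ} (hab : a < b) {f : ℂ → ℂ}
    (hd : DiffContOnCl ℂ f (im ⁻¹' Ioo a b)) (hB : IsBounded (f '' (im ⁻¹' Ioo a b)))
    (ha : ∀ z : ℂ, z.im = a → (f z).re = 0) (hb : ∀ z : ℂ, z.im = b → (f z).re = 0) :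
    ∃ c, EqOn f (fun _ => c) (im ⁻¹' Icc a b) := by
  have hre : ∀ z ∈ im ⁻¹' Ioo a b, (f z).re = 0 := fun z hz => by
    have hneg : (-f z).re ≤ 0 := re_nonpos_horizontal_strip (f := -f) hd.neg
      (by rw [show -f = Neg.neg ∘ f from rfl, image_comp, image_neg_eq_neg]; exact hB.neg)
      (fun w hw => by simp [ha w hw]) (fun w hw => by simp [hb w hw]) hz.1.le hz.2.le
    exact le_antisymm (re_nonpos_horizontal_strip hd hB (fun w hw => (ha w hw).le)
      (fun w hw => (hb w hw).le) hz.1.le hz.2.le) (by simpa using hneg)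
  have hS : IsOpen (im ⁻¹' Ioo a b) := isOpen_Ioo.preimage continuous_im
  have hconn : IsConnected (im ⁻¹' Ioo a b) :=
    ((convex_Ioo a b).linear_preimage imLm).isConnected
      ⟨⟨0, (a + b) / 2⟩, show (a + b) / 2 ∈ Ioo a b by constructor <;> linarith⟩
  obtain ⟨c, hc⟩ := (hd.differentiableOn.analyticOnNhd hS).eq_const_of_re_eq_const hre hS hconn
  refine ⟨c, ?_⟩
  rw [← closure_Ioo hab.ne, ← closure_preimage_im]
  exact EqOn.of_subset_closure hc hd.continuousOn continuousOn_const subset_closure subset_rfl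

section

variable {E : Type*} [NormedAddCommGroup E] [InnerProductSpace ℂ E]

lemma SatisfiesKMSFor.inner_eq_zero {H : Submodule ℝ E} {G : ℝ → E ≃ₗᵢ[ℂ] E}
    (hG : SatisfiesKMSFor H G) (hG0 : G 0 = LinearIsometryEquiv.refl ℂ E) {ξ η : E}
    (hξ : ξ ∈ H) (hη : η ∈ H) (h₀ : ∀ t : ℝ, (⟪η, G t ξ⟫_ℂ).re = 0)
    (h₁ : ∀ t : ℝ, (⟪ξ, G t η⟫_ℂ).re = 0) :
    ⟪η, ξ⟫_ℂ = 0 := by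
  obtain ⟨F, hFc, hFd, hFb, hF₀, hF₁⟩ := hG ξ hξ η hη
  have hd : DiffContOnCl ℂ F (im ⁻¹' Ioo (-1) 0) :=
    ⟨fun z hz => (hFd z hz.1 hz.2).differentiableWithinAt, by
      rw [closure_preimage_im, closure_Ioo (by norm_num)]; exact hFc⟩
  obtain ⟨c, hc⟩ := exists_eqOn_const_horizontal_strip (by norm_num) hd
    (hFb.subset (image_mono fun z hz => ⟨hz.1.le, hz.2.le⟩))
    (fun z hz => by
      rw [show z = z.re - I from Complex.ext (by simp) (by simp [hz]), hF₁]; exact h₁ _)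
    (fun z hz => by rw [show z = z.re from Complex.ext rfl (by simp [hz]), hF₀]; exact h₀ _)
  have hF0 : F 0 = ⟪η, ξ⟫_ℂ := by simpa [hG0] using hF₀ 0
  have hFI : F (-I) = ⟪ξ, η⟫_ℂ := by simpa [hG0] using hF₁ 0
  have hsymm : ⟪η, ξ⟫_ℂ = ⟪ξ, η⟫_ℂ := by
    rw [← hF0, ← hFI, hc (by simp : (0 : ℂ) ∈ im ⁻¹' Icc (-1) 0),
      hc (by simp : -I ∈ im ⁻¹' Icc (-1) 0)]
  have him := congrArg im (hsymm.trans (inner_conj_symm ξ η).symm)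
  rw [conj_im] at him
  exact Complex.ext (by simpa [hG0] using h₀ 0) (by rw [zero_im]; linarith)

lemma IsCyclicSub.eq_zero_of_inner_eq_zero {K : Submodule ℝ E} (hK : IsCyclicSub K) {ζ : E}
    (h : ∀ η ∈ K, ⟪η, ζ⟫_ℂ = 0) : ζ = 0 := by
  have hKiK : ∀ v ∈ K ⊔ K.map (mulI : E →ₗ[ℝ] E), ⟪v, ζ⟫_ℂ = 0 := by
    intro v hv
    obtain ⟨a, ha, _, ⟨b, hb, rfl⟩, rfl⟩ := Submodule.mem_sup.1 hv
    change ⟪a + I • b, ζ⟫_ℂ = 0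
    rw [inner_add_left, inner_smul_left, h a ha, h b hb, mul_zero, add_zero]
  have hζ : (fun v => ⟪v, ζ⟫_ℂ) = fun _ => 0 :=
    Continuous.ext_on hK (continuous_id.inner continuous_const) continuous_const hKiK
  exact inner_self_eq_zero.1 (congrFun hζ ζ)

lemma eq_of_le_of_forall_re_inner_eq_zero [CompleteSpace E] {K H : Submodule ℝ E}
    (hK : IsClosed (K : Set E)) (hKH : K ≤ H)
    (h : ∀ ζ ∈ H, (∀ u ∈ K, (⟪u, ζ⟫_ℂ).re = 0) → ζ = 0) : K = H := by
  let _ : InnerProductSpace ℝ E := InnerProductSpace.complexToReal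
  have : CompleteSpace K := hK.completeSpace_coe
  have hperp : Kᗮ ⊓ H = ⊥ := eq_bot_iff.2 fun ζ hζ =>
    h ζ hζ.2 fun u hu => (Submodule.mem_orthogonal K ζ).1 hζ.1 u hu
  simpa [hperp] using Submodule.sup_orthogonal_inf_of_hasOrthogonalProjection hKH

end

theorem stmt_7_general (H : Submodule ℝ 𝓗)
    (G : ℝ → (𝓗 ≃ₗᵢ[ℂ] 𝓗)) (hG : IsModularGroupOf H G)
    (K : Submodule ℝ 𝓗) (hKcl : IsClosed (K : Set 𝓗)) (hKH : K ≤ H)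
    (hGK : ∀ t : ℝ, (⇑(G t)) '' (K : Set 𝓗) = (K : Set 𝓗))
    (hKcyc : IsCyclicSub K) :
    K = H := by
  refine eq_of_le_of_forall_re_inner_eq_zero hKcl hKH fun ζ hζH hζK =>
    hKcyc.eq_zero_of_inner_eq_zero fun η hη => ?_
  refine hG.2.inner_eq_zero hG.1.1 hζH (hKH hη) (fun t => ?_) (fun t => ?_)
  · obtain ⟨η', hη', rfl⟩ : η ∈ G t '' K := (hGK t).symm ▸ hη
    rw [LinearIsometryEquiv.inner_map_map]
    exact hζK η' hη'
  · rw [← inner_conj_symm, conj_re]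
    exact hζK _ ((hGK t).subset (mem_image_of_mem _ hη))

theorem stmt_7 (H : Submodule ℝ 𝓗) (hH : IsStandardSub H)
    (G : ℝ → (𝓗 ≃ₗᵢ[ℂ] 𝓗)) (hG : IsModularGroupOf H G)
    (K : Submodule ℝ 𝓗) (hKcl : IsClosed (K : Set 𝓗)) (hKH : K ≤ H)
    (hGK : ∀ t : ℝ, (⇑(G t)) '' (K : Set 𝓗) = (K : Set 𝓗))
    (hKcyc : IsCyclicSub K) :
    K = H :=
  stmt_7_general H G hG K hKcl hKH hGK hKcyc
end

section
/- Let W_3 = {x ∈ ℝ^{1+3} : |x_0| < x_3} and let E = {x ∈ ℝ^{1+3} : x_0 = 0 = x_3} be its edge. If U is a spatial rotation (an orthogonal transformation of (x_1,x_2,x_3) fixing x_0) and T is a Lorentz boost (a positive-definite symmetric Lorentz transformation) with U^{-1} W_3 = T W_3, then U^{-1} W_3 = W_3 = T W_3. -/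
/- STATEMENT 13: Let W₃ = {x : |x₀| < x₃}.  If U is a spatial rotation (a linear bijection
preserving the Euclidean norm and fixing the time coordinate) and T a Lorentz boost (a
symmetric positive-definite Lorentz transformation) with U⁻¹W₃ = TW₃, then
U⁻¹W₃ = W₃ = TW₃. -/

open Finset in
/-- The wedge in the x₃ direction. -/
def W3 : Set (Fin 4 → ℝ) := {x | |x 0| < x 3}

/-- The Minkowski quadratic form on ℝ⁴. -/
def minkQ (x : Fin 4 → ℝ) : ℝ := (x 0) ^ 2 - (x 1) ^ 2 - (x 2) ^ 2 - (x 3) ^ 2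

/-!
Every `u` in the edge `E = {x₀ = 0 = x₃}` translates `W3` into itself, so `T u` translates
`T W3 = U⁻¹ W3` into itself and, as `-u ∈ E` too, `±U T u` translate `W3` into itself. This
forces `(U T u)₀ = 0`, and `U` fixes time, so `T` maps `E` into the time-zero hyperplane.
A symmetric Lorentz transformation satisfies `T⁻¹ = η T η`, whence `T² = 1` on `E`, and
positive definiteness turns this into `T = 1` on `E`. By symmetry `T` then acts only on the
`(x₀, x₃)`-plane, as `[[a, b], [b, a]]` with `a² - b² = 1` and `a > 0`, and such a boost
preserves `W3`.
-/

lemma add_mem_W3 {u w : Fin 4 → ℝ} (hu0 : u 0 = 0) (hu3 : u 3 = 0) (hw : w ∈ W3) :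
    u + w ∈ W3 := by
  simpa [W3, hu0, hu3] using hw

lemma abs_le_of_forall_add_mem_W3 {v : Fin 4 → ℝ} (hv : ∀ w ∈ W3, v + w ∈ W3) :
    |v 0| ≤ v 3 := by
  refine le_of_forall_pos_lt_add fun t ht => ?_
  have hw : Pi.single 3 t ∈ W3 := by simpa [W3] using ht
  simpa [W3] using hv _ hw

lemma eq_zero_of_forall_add_mem_W3 {v : Fin 4 → ℝ} (hv : ∀ w ∈ W3, v + w ∈ W3)
    (hv' : ∀ w ∈ W3, -v + w ∈ W3) : v 0 = 0 := by
  have h := abs_le_of_forall_add_mem_W3 hv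
  have h' := abs_le_of_forall_add_mem_W3 hv'
  simp only [Pi.neg_apply, abs_neg] at h'
  exact abs_nonpos_iff.mp (by linarith)

section Edge

variable {U : (Fin 4 → ℝ) ≃ₗ[ℝ] (Fin 4 → ℝ)} {T : (Fin 4 → ℝ) →ₗ[ℝ] (Fin 4 → ℝ)}

lemma add_mem_W3_of_symm_image_eq (hW : U.symm '' W3 = T '' W3) {u : Fin 4 → ℝ}
    (hu0 : u 0 = 0) (hu3 : u 3 = 0) : ∀ w ∈ W3, U (T u) + w ∈ W3 := by
  intro w hw
  obtain ⟨z, hz, hTz⟩ : U.symm w ∈ T '' W3 := hW ▸ Set.mem_image_of_mem _ hw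
  obtain ⟨y, hy, hTy⟩ : T (u + z) ∈ U.symm '' W3 :=
    hW ▸ Set.mem_image_of_mem _ (add_mem_W3 hu0 hu3 hz)
  have hsplit : U (T (u + z)) = U (T u) + w := by
    rw [map_add, map_add, hTz, U.apply_symm_apply]
  rwa [← hsplit, ← hTy, U.apply_symm_apply]

lemma apply_zero_eq_zero_of_symm_image_eq (hU0 : ∀ x, U x 0 = x 0)
    (hW : U.symm '' W3 = T '' W3) {u : Fin 4 → ℝ} (hu0 : u 0 = 0) (hu3 : u 3 = 0) :
    T u 0 = 0 := by
  rw [← hU0 (T u)]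
  refine eq_zero_of_forall_add_mem_W3 (add_mem_W3_of_symm_image_eq hW hu0 hu3) ?_
  simpa only [map_neg] using add_mem_W3_of_symm_image_eq hW (u := -u) (by simp [hu0])
    (by simp [hu3])

end Edge

section SelfAdjoint

variable {ι : Type*} [Fintype ι] {T : (ι → ℝ) →ₗ[ℝ] (ι → ℝ)}

lemma apply_eq_self_of_apply_apply_eq_self (hpos : ∀ x, x ≠ 0 → 0 < T x ⬝ᵥ x)
    {x : ι → ℝ} (hx : T (T x) = x) : T x = x := by
  by_contra hne
  have hd : T x - x ≠ 0 := sub_ne_zero.mpr hne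
  have hTd : T (T x - x) = -(T x - x) := by rw [map_sub, hx, neg_sub]
  have hTdd := hpos _ hd
  rw [hTd, neg_dotProduct] at hTdd
  have hsq : 0 ≤ (T x - x) ⬝ᵥ (T x - x) := Finset.sum_nonneg fun i _ => mul_self_nonneg _
  linarith

variable [DecidableEq ι]

lemma apply_eq_dotProduct_apply_single (hsym : ∀ x y, T x ⬝ᵥ y = x ⬝ᵥ T y) (x : ι → ℝ)
    (i : ι) : T x i = x ⬝ᵥ T (Pi.single i 1) := by
  rw [← hsym, dotProduct_single_one]

lemma apply_single_comm (hsym : ∀ x y, T x ⬝ᵥ y = x ⬝ᵥ T y) (i j : ι) :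
    T (Pi.single i 1) j = T (Pi.single j 1) i := by
  rw [apply_eq_dotProduct_apply_single hsym, single_one_dotProduct]

end SelfAdjoint

def minkB (x y : Fin 4 → ℝ) : ℝ := x 0 * y 0 - x 1 * y 1 - x 2 * y 2 - x 3 * y 3

lemma two_mul_minkB (x y : Fin 4 → ℝ) :
    2 * minkB x y = minkQ (x + y) - minkQ x - minkQ y := by
  simp only [minkB, minkQ, Pi.add_apply]
  ring

lemma minkB_eq_neg_dotProduct {p : Fin 4 → ℝ} (hp : p 0 = 0) (q : Fin 4 → ℝ) :
    minkB p q = -(p ⬝ᵥ q) := by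
  simp only [minkB, dotProduct, Fin.sum_univ_four, hp]
  ring

section Lorentz

variable {T : (Fin 4 → ℝ) →ₗ[ℝ] (Fin 4 → ℝ)}

lemma minkB_map (hlor : ∀ x, minkQ (T x) = minkQ x) (x y : Fin 4 → ℝ) :
    minkB (T x) (T y) = minkB x y := by
  have h := two_mul_minkB (T x) (T y)
  rw [← map_add, hlor, hlor, hlor, ← two_mul_minkB] at h
  linarith

lemma apply_apply_eq_self_of_apply_zero_eq_zero (hsym : ∀ x y, T x ⬝ᵥ y = x ⬝ᵥ T y)
    (hlor : ∀ x, minkQ (T x) = minkQ x) {x : Fin 4 → ℝ} (hx : x 0 = 0) (hTx : T x 0 = 0) :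
    T (T x) = x := by
  -- `T⁻¹ = η T η`, and `η = -1` on the time-zero vectors `x` and `T x`
  funext i
  rw [apply_eq_dotProduct_apply_single hsym, ← neg_neg (T x ⬝ᵥ _),
    ← minkB_eq_neg_dotProduct hTx, minkB_map hlor, minkB_eq_neg_dotProduct hx, neg_neg,
    dotProduct_single_one]

end Lorentz

def boost3 (a b : ℝ) (x : Fin 4 → ℝ) : Fin 4 → ℝ :=
  ![a * x 0 + b * x 3, x 1, x 2, b * x 0 + a * x 3]

lemma boost3_boost3_neg {a b : ℝ} (hab : a ^ 2 - b ^ 2 = 1) (x : Fin 4 → ℝ) :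
    boost3 a b (boost3 a (-b) x) = x := by
  funext i
  fin_cases i <;> simp [boost3]
  · linear_combination x 0 * hab
  · linear_combination x 3 * hab

lemma mem_W3_iff {x : Fin 4 → ℝ} : x ∈ W3 ↔ 0 < x 3 + x 0 ∧ 0 < x 3 - x 0 := by
  show |x 0| < x 3 ↔ _
  rw [abs_lt]
  constructor <;> rintro ⟨h₁, h₂⟩ <;> constructor <;> linarith

lemma boost3_mem_W3 {a b : ℝ} (hba : |b| < a) {x : Fin 4 → ℝ} (hx : x ∈ W3) :
    boost3 a b x ∈ W3 := by
  obtain ⟨hb₁, hb₂⟩ := abs_lt.mp hba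
  obtain ⟨hx₁, hx₂⟩ := mem_W3_iff.mp hx
  rw [mem_W3_iff]
  simp only [boost3, Matrix.cons_val]
  constructor
  · linear_combination mul_pos (show 0 < a + b by linarith) hx₁
  · linear_combination mul_pos (show 0 < a - b by linarith) hx₂

lemma image_boost3_W3 {a b : ℝ} (hba : |b| < a) (hab : a ^ 2 - b ^ 2 = 1) :
    boost3 a b '' W3 = W3 := by
  refine Set.Subset.antisymm (Set.image_subset_iff.mpr fun x => boost3_mem_W3 hba) ?_
  intro y hy
  exact ⟨_, boost3_mem_W3 (by rwa [abs_neg]) hy, boost3_boost3_neg hab y⟩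

lemma exists_eq_boost3 {T : (Fin 4 → ℝ) →ₗ[ℝ] (Fin 4 → ℝ)}
    (hsym : ∀ x y, T x ⬝ᵥ y = x ⬝ᵥ T y) (hpos : ∀ x, x ≠ 0 → 0 < T x ⬝ᵥ x)
    (hlor : ∀ x, minkQ (T x) = minkQ x) (h1 : T (Pi.single 1 1) = Pi.single 1 1)
    (h2 : T (Pi.single 2 1) = Pi.single 2 1) :
    ∃ a b, |b| < a ∧ a ^ 2 - b ^ 2 = 1 ∧ ⇑T = boost3 a b := by
  have hc := apply_single_comm hsym
  have h01 : T (Pi.single 0 1) 1 = 0 := by rw [hc, h1]; simp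
  have h02 : T (Pi.single 0 1) 2 = 0 := by rw [hc, h2]; simp
  have h31 : T (Pi.single 3 1) 1 = 0 := by rw [hc, h1]; simp
  have h32 : T (Pi.single 3 1) 2 = 0 := by rw [hc, h2]; simp
  have h30 : T (Pi.single 3 1) 0 = T (Pi.single 0 1) 3 := hc 3 0
  have ha : 0 < T (Pi.single 0 1) 0 := by
    simpa [dotProduct_single_one] using hpos (Pi.single 0 1) (by simp)
  have hd : 0 < T (Pi.single 3 1) 3 := by
    simpa [dotProduct_single_one] using hpos (Pi.single 3 1) (by simp)
  have hq0 : T (Pi.single 0 1) 0 ^ 2 - T (Pi.single 0 1) 3 ^ 2 = 1 := by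
    simpa [minkQ, h01, h02] using hlor (Pi.single 0 1)
  have hq3 : T (Pi.single 0 1) 3 ^ 2 - T (Pi.single 3 1) 3 ^ 2 = -1 := by
    simpa [minkQ, h30, h31, h32] using hlor (Pi.single 3 1)
  have had : T (Pi.single 3 1) 3 = T (Pi.single 0 1) 0 := by nlinarith
  refine ⟨T (Pi.single 0 1) 0, T (Pi.single 0 1) 3, abs_lt_of_sq_lt_sq (by linarith) ha.le,
    hq0, ?_⟩
  funext x i
  rw [apply_eq_dotProduct_apply_single hsym]
  fin_cases i <;>
    simp [boost3, dotProduct, Fin.sum_univ_four, h1, h2, h01, h02, h31, h32, h30, had] <;> ring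

theorem stmt_13_general (U : (Fin 4 → ℝ) ≃ₗ[ℝ] (Fin 4 → ℝ)) (T : (Fin 4 → ℝ) →ₗ[ℝ] (Fin 4 → ℝ))
    -- U is a spatial rotation: it fixes the time coordinate and is Euclidean-orthogonal
    (hU0 : ∀ x, U x 0 = x 0)
    -- T is a boost: symmetric, positive definite and a Lorentz transformation
    (hTsym : ∀ x y, ∑ i, T x i * y i = ∑ i, x i * T y i)
    (hTpos : ∀ x, x ≠ 0 → 0 < ∑ i, T x i * x i)
    (hTlor : ∀ x, minkQ (T x) = minkQ x)
    -- hypothesis: U⁻¹ W₃ = T W₃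
    (hW : (⇑U.symm) '' W3 = (⇑T) '' W3) :
    (⇑U.symm) '' W3 = W3 ∧ (⇑T) '' W3 = W3 := by
  have hfix : ∀ i : Fin 4, i ≠ 0 → i ≠ 3 → T (Pi.single i 1) = Pi.single i 1 := fun i h0 h3 =>
    apply_eq_self_of_apply_apply_eq_self hTpos <|
      apply_apply_eq_self_of_apply_zero_eq_zero hTsym hTlor (by simp [h0.symm])
        (apply_zero_eq_zero_of_symm_image_eq hU0 hW (by simp [h0.symm]) (by simp [h3.symm]))
  obtain ⟨a, b, hba, hab, hTboost⟩ :=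
    exists_eq_boost3 hTsym hTpos hTlor (hfix 1 (by decide) (by decide))
      (hfix 2 (by decide) (by decide))
  have hTW : (⇑T) '' W3 = W3 := hTboost ▸ image_boost3_W3 hba hab
  exact ⟨hW.trans hTW, hTW⟩

theorem stmt_13 (U : (Fin 4 → ℝ) ≃ₗ[ℝ] (Fin 4 → ℝ)) (T : (Fin 4 → ℝ) →ₗ[ℝ] (Fin 4 → ℝ))
    -- U is a spatial rotation: it fixes the time coordinate and is Euclidean-orthogonal
    (hU0 : ∀ x, U x 0 = x 0)
    (hUorth : ∀ x, ∑ i, (U x i) ^ 2 = ∑ i, (x i) ^ 2)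
    -- T is a boost: symmetric, positive definite and a Lorentz transformation
    (hTsym : ∀ x y, ∑ i, T x i * y i = ∑ i, x i * T y i)
    (hTpos : ∀ x, x ≠ 0 → 0 < ∑ i, T x i * x i)
    (hTlor : ∀ x, minkQ (T x) = minkQ x)
    -- hypothesis: U⁻¹ W₃ = T W₃
    (hW : (⇑U.symm) '' W3 = (⇑T) '' W3) :
    (⇑U.symm) '' W3 = W3 ∧ (⇑T) '' W3 = W3 :=
  stmt_13_general U T hU0 hTsym hTpos hTlor hW
end
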